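/- arXiv:2605.03991 — 7 statements merged into one kernel-verified Lean document; each statement's English description precedes it below -/
import Mathlib

section
/- Let k, r, L be positive integers with L dividing k, and set n_i = k/L for each i. Then the average repair bandwidth ratio of data nodes, namely (1/(k^2 r)) * [ (k(L-1) + (r-L+1)(k/L) + 2(L-1)(r-L+1)) * (k/L) + \sum_{i=1}^{L-1} (k i + (r-i)(k/L) + (r-i)) * (k/L) ], equals L/(2r) + 1/L - 3/(2 L r) + 1/(L^2 r) + ( -(5/2) L^2 + 3 L r + (9/2) L - 3 r - 2 ) / (k L r), as an identity of real numbers. -/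
open Finset

theorem sum_Icc_one_natCast_mul_two {R : Type*} [CommSemiring R] (n : ℕ) :
    (∑ i ∈ Icc 1 n, (i : R)) * 2 = n * (n + 1) := by
  induction n with
  | zero => simp
  | succ n ih =>
    rw [sum_Icc_succ_top (by omega), add_mul, ih]
    push_cast
    ring

theorem sum_Icc_one_affine {K : Type*} [Field K] [NeZero (2 : K)] (n : ℕ) (a b : K) :
    ∑ i ∈ Icc 1 n, (a * i + b) = a * (n * (n + 1) / 2) + n * b := by
  rw [sum_add_distrib, ← mul_sum, sum_const, Nat.card_Icc, add_tsub_cancel_right, nsmul_eq_mul,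
    ← sum_Icc_one_natCast_mul_two, mul_div_cancel_right₀ _ two_ne_zero]

theorem data_node_repair_ratio_general (k r L : ℕ) (hk : 0 < k) (hr : 0 < r) (hL : 0 < L) :
    (1 / ((k : ℝ) ^ 2 * r)) *
      (((k : ℝ) * ((L : ℝ) - 1) + ((r : ℝ) - (L : ℝ) + 1) * ((k : ℝ) / (L : ℝ))
          + 2 * ((L : ℝ) - 1) * ((r : ℝ) - (L : ℝ) + 1)) * ((k : ℝ) / (L : ℝ))
        + ∑ i ∈ Finset.Icc 1 (L - 1),
            ((k : ℝ) * (i : ℝ) + ((r : ℝ) - (i : ℝ)) * ((k : ℝ) / (L : ℝ))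
              + ((r : ℝ) - (i : ℝ))) * ((k : ℝ) / (L : ℝ)))
    = (L : ℝ) / (2 * r) + 1 / (L : ℝ) - 3 / (2 * (L : ℝ) * r) + 1 / ((L : ℝ) ^ 2 * r)
      + (-(5 / 2) * (L : ℝ) ^ 2 + 3 * (L : ℝ) * (r : ℝ) + (9 / 2) * (L : ℝ)
          - 3 * (r : ℝ) - 2) / ((k : ℝ) * (L : ℝ) * (r : ℝ)) := by
  set m : ℝ := k / L with hm
  have group_sum : ∑ i ∈ Icc 1 (L - 1), ((k : ℝ) * i + (r - i) * m + (r - i)) * m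
      = (k - m - 1) * m * (((L - 1 : ℕ) : ℝ) * ((L - 1 : ℕ) + 1) / 2)
        + ((L - 1 : ℕ) : ℝ) * ((r * m + r) * m) := by
    rw [← sum_Icc_one_affine]
    exact sum_congr rfl fun i _ => by ring
  rw [group_sum, Nat.cast_pred hL, hm]
  have : (k : ℝ) ≠ 0 := by positivity
  have : (r : ℝ) ≠ 0 := by positivity
  have : (L : ℝ) ≠ 0 := by positivity
  field_simp
  ring

/-- Average repair bandwidth ratio of data nodes of the conjugate-piggybacking
code `C(n,k,L)` when `L` divides `k` (so that every group has `k/L` nodes). -/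
theorem data_node_repair_ratio (k r L : ℕ) (hk : 0 < k) (hr : 0 < r) (hL : 0 < L)
    (hdvd : L ∣ k) :
    (1 / ((k : ℝ) ^ 2 * r)) *
      (((k : ℝ) * ((L : ℝ) - 1) + ((r : ℝ) - (L : ℝ) + 1) * ((k : ℝ) / (L : ℝ))
          + 2 * ((L : ℝ) - 1) * ((r : ℝ) - (L : ℝ) + 1)) * ((k : ℝ) / (L : ℝ))
        + ∑ i ∈ Finset.Icc 1 (L - 1),
            ((k : ℝ) * (i : ℝ) + ((r : ℝ) - (i : ℝ)) * ((k : ℝ) / (L : ℝ))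
              + ((r : ℝ) - (i : ℝ))) * ((k : ℝ) / (L : ℝ)))
    = (L : ℝ) / (2 * r) + 1 / (L : ℝ) - 3 / (2 * (L : ℝ) * r) + 1 / ((L : ℝ) ^ 2 * r)
      + (-(5 / 2) * (L : ℝ) ^ 2 + 3 * (L : ℝ) * (r : ℝ) + (9 / 2) * (L : ℝ)
          - 3 * (r : ℝ) - 2) / ((k : ℝ) * (L : ℝ) * (r : ℝ)) :=
  data_node_repair_ratio_general k r L hk hr hL
end

section
/- For every integer r \geq 6, the inequality (2\sqrt{r-1} + 1)/(2\sqrt{r-1} + r) > \sqrt{2r-1}/(2r) + 1/\sqrt{2r-1} - 3/(2 r \sqrt{2r-1}) + 1/(r(2r-1)) holds. -/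
/-!
Put `t = √(r - 1)`, so that `r = t² + 1` and `2r - 1 = 2t² + 1`. The left side is
`(2t + 1)/(t + 1)²` and the right side collapses to `(2t²√(2t² + 1) + 1)/(r(2r - 1))`.
Clearing denominators, the inequality becomes `(t + 1)²√(2t² + 1) < 2t³ + t² + 3t + 1`,
and squaring leaves the polynomial `t(t - 2)(2t⁴ - 2t - 1)`, positive as soon as `t > 2`,
i.e. for every real `r > 5`.
-/

open Real

lemma sq_mul_sqrt_two_mul_sq_add_one_lt {t : ℝ} (ht : 2 < t) :
    (t + 1) ^ 2 * √(2 * t ^ 2 + 1) < 2 * t ^ 3 + t ^ 2 + 3 * t + 1 := by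
  have hpoly : 0 < t * (t - 2) * (2 * t ^ 4 - 2 * t - 1) := by
    have : 0 < t - 2 := by linarith
    have : 0 < 2 * t ^ 4 - 2 * t - 1 := by nlinarith [mul_pos this (by linarith : (0 : ℝ) < t)]
    positivity
  rw [← sqrt_sq (by positivity : 0 ≤ (t + 1) ^ 2), ← sqrt_mul (by positivity),
    sqrt_lt' (by positivity)]
  linear_combination hpoly

lemma proposed_bound_eq {x : ℝ} (hx : 1 / 2 < x) :
    √(2 * x - 1) / (2 * x) + 1 / √(2 * x - 1) - 3 / (2 * x * √(2 * x - 1))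
        + 1 / (x * (2 * x - 1))
      = (2 * (x - 1) * √(2 * x - 1) + 1) / (x * (2 * x - 1)) := by
  have hs : √(2 * x - 1) ^ 2 = 2 * x - 1 := sq_sqrt (by linarith)
  have hs0 : √(2 * x - 1) ≠ 0 := (sqrt_pos.mpr (by linarith)).ne'
  have hx0 : x ≠ 0 := by positivity
  have hx1 : 2 * x - 1 ≠ 0 := by linarith
  field_simp
  linear_combination (3 - 2 * x) * hs

theorem proposed_bound_lt_oop_bound {x : ℝ} (hx : 5 < x) :
    √(2 * x - 1) / (2 * x) + 1 / √(2 * x - 1) - 3 / (2 * x * √(2 * x - 1))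
        + 1 / (x * (2 * x - 1))
      < (2 * √(x - 1) + 1) / (2 * √(x - 1) + x) := by
  rw [proposed_bound_eq (by linarith)]
  obtain ⟨t, ht, rfl⟩ : ∃ t, 2 < t ∧ x = t ^ 2 + 1 :=
    ⟨√(x - 1), lt_sqrt_of_sq_lt (by linarith), by rw [sq_sqrt (by linarith)]; ring⟩
  have hsqrt : √(t ^ 2 + 1 - 1) = t := by simp [sqrt_sq (by linarith : 0 ≤ t)]
  have hkey := sq_mul_sqrt_two_mul_sq_add_one_lt ht
  rw [hsqrt, show 2 * (t ^ 2 + 1) - 1 = 2 * t ^ 2 + 1 by ring,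
    div_lt_div_iff₀ (by positivity) (by positivity)]
  linarith [mul_lt_mul_of_pos_left hkey (by positivity : (0 : ℝ) < 2 * t ^ 2)]

/-- For every integer `r ≥ 6`, the lower bound on the average data-node repair
bandwidth ratio of the OOP code strictly exceeds that of the proposed code. -/
theorem oop_vs_proposed_data (r : ℤ) (hr : 6 ≤ r) :
    (2 * Real.sqrt ((r : ℝ) - 1) + 1) / (2 * Real.sqrt ((r : ℝ) - 1) + (r : ℝ))
      > Real.sqrt (2 * (r : ℝ) - 1) / (2 * (r : ℝ))
        + 1 / Real.sqrt (2 * (r : ℝ) - 1)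
        - 3 / (2 * (r : ℝ) * Real.sqrt (2 * (r : ℝ) - 1))
        + 1 / ((r : ℝ) * (2 * (r : ℝ) - 1)) :=
  proposed_bound_lt_oop_bound (by exact_mod_cast hr)
end

section
/- For every real number r > 5, setting L = \sqrt{2r-1}, the inequality (\sqrt{r-1} + 1)/r > 1/r + (L-1)(2r-L)/(2 L r^2) holds. -/
/-- For `r > 5` and `L = √(2r-1)`, the parity-node repair bound of the OOP code
strictly exceeds that of the proposed code. -/
theorem oop_vs_proposed_parity (r L : ℝ) (hr : 5 < r) (hL : L = Real.sqrt (2 * r - 1)) :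
    (Real.sqrt (r - 1) + 1) / r > 1 / r + (L - 1) * (2 * r - L) / (2 * L * r ^ 2) := by
  have hr1 : (0:ℝ) < r := by linarith
  have hL0 : 0 < L := by
    rw [hL]; exact Real.sqrt_pos.2 (by linarith)
  have hLsq : L ^ 2 = 2 * r - 1 := by
    rw [hL, Real.sq_sqrt (by linarith)]
  have hs : 2 < Real.sqrt (r - 1) := by
    have := (Real.lt_sqrt (by norm_num : (0:ℝ) ≤ 2)).2 (by nlinarith : (2:ℝ)^2 < r - 1)
    linarith
  have key : (L - 1) * (2 * r - L) < 2 * L * r * Real.sqrt (r - 1) := by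
    have h4 : 2 * L * r * 2 < 2 * L * r * Real.sqrt (r - 1) :=
      mul_lt_mul_of_pos_left hs (by positivity)
    nlinarith [mul_pos hL0 hr1]
  have h2 : (L - 1) * (2 * r - L) / (2 * L * r ^ 2) < Real.sqrt (r - 1) / r := by
    rw [div_lt_div_iff₀ (by positivity) hr1]
    nlinarith [mul_lt_mul_of_pos_right key hr1]
  have h3 : (Real.sqrt (r - 1) + 1) / r = Real.sqrt (r - 1) / r + 1 / r := add_div _ _ _
  rw [gt_iff_lt, h3]
  linarith
end

section
/- For every real number r > 1, setting L = \sqrt{2r-1}, the inequality L/r + (r-L)/r^2 > 1/r + (L-1)(2r-L)/(2 L r^2) holds. -/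
/-! Substituting `2r - 1 = L²`, the difference of the two bounds is `(L - 1)(2Lr - 1) / (2Lr²)`,
which is positive because `L > 1` and `r > 1`. -/

theorem parity_bound_sub_eq {r L : ℝ} (hr : r ≠ 0) (hL : L ≠ 0) (hsq : L ^ 2 = 2 * r - 1) :
    L / r + (r - L) / r ^ 2 - (1 / r + (L - 1) * (2 * r - L) / (2 * L * r ^ 2))
      = (L - 1) * (2 * L * r - 1) / (2 * L * r ^ 2) := by
  field_simp
  linear_combination -hsq

/-- For `r > 1` and `L = √(2r-1)`, the parity-node repair bound of the code `C₁`
strictly exceeds that of the proposed code. -/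
theorem c1_vs_proposed_parity (r L : ℝ) (hr : 1 < r) (hL : L = Real.sqrt (2 * r - 1)) :
    L / r + (r - L) / r ^ 2 > 1 / r + (L - 1) * (2 * r - L) / (2 * L * r ^ 2) := by
  have hL1 : 1 < L := hL ▸ Real.lt_sqrt zero_le_one |>.2 (by linarith)
  have hsq : L ^ 2 = 2 * r - 1 := hL ▸ Real.sq_sqrt (by linarith)
  rw [gt_iff_lt, ← sub_pos, parity_bound_sub_eq (by positivity) (by positivity) hsq]
  have h2Lr : 1 < 2 * L * r := by nlinarith
  apply div_pos <;> nlinarith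
end

section
/- For every real number r > 1 and every real m > 0, the inequality 1/m + (m-1)^2/(m(r-1)) \geq 2/(\sqrt{r} + 1) holds. -/
/-- For `r > 1` and `m > 0`, `γ₈(m,1) = 1/m + (m-1)²/(m(r-1)) ≥ 2/(√r + 1)`. -/
theorem gamma8_L1_lower_bound (r m : ℝ) (hr : 1 < r) (hm : 0 < m) :
    1 / m + (m - 1) ^ 2 / (m * (r - 1)) ≥ 2 / (Real.sqrt r + 1) := by
  have hs : Real.sqrt r ^ 2 = r := Real.sq_sqrt (by linarith)
  have hs1 : 1 < Real.sqrt r := by nlinarith [Real.sqrt_nonneg r]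
  set s := Real.sqrt r
  have hr1 : (0:ℝ) < r - 1 := by linarith
  rw [ge_iff_le, div_add_div _ _ (ne_of_gt hm) (by positivity),
    div_le_div_iff₀ (by positivity) (by positivity)]
  nlinarith [mul_nonneg (mul_nonneg hm.le (by linarith : (0:ℝ) ≤ s + 1)) (sq_nonneg (s - m)), hs]
end

section
/- For every real number r > 1 and every real m > 0, the inequality 3/(2m) + (m^2 - 3m + 5/2)/(2m(r-1)) \geq \sqrt{3r - 1/2}/(r-1) - 3/(2(r-1)) holds. -/
/-- For `r > 1` and `m > 0`,
`γ₈(m,2) = 3/(2m) + (m² - 3m + 5/2)/(2m(r-1)) ≥ √(3r - 1/2)/(r-1) - 3/(2(r-1))`. -/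
theorem gamma8_L2_lower_bound (r m : ℝ) (hr : 1 < r) (hm : 0 < m) :
    3 / (2 * m) + (m ^ 2 - 3 * m + 5 / 2) / (2 * m * (r - 1))
      ≥ Real.sqrt (3 * r - 1 / 2) / (r - 1) - 3 / (2 * (r - 1)) := by
  have h1 : 0 < r - 1 := by linarith
  set s := Real.sqrt (3 * r - 1 / 2) with hs
  have hs0 : 0 ≤ s := Real.sqrt_nonneg _
  have hs2 : s ^ 2 = 3 * r - 1 / 2 := Real.sq_sqrt (by linarith)
  rw [ge_iff_le, ← sub_nonneg]
  have key : 3 / (2 * m) + (m ^ 2 - 3 * m + 5 / 2) / (2 * m * (r - 1))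
      - (s / (r - 1) - 3 / (2 * (r - 1)))
      = (2 * (m - s) ^ 2 + (6 * r - 1 - 2 * s ^ 2)) / (4 * m * (r - 1)) := by
    field_simp
    ring
  rw [key]
  apply div_nonneg
  · nlinarith [sq_nonneg (m - s)]
  · positivity
end

section
/- There are no real numbers r > 0, L \geq 2, and m with m < r such that both 6 m^2 = (3r-1) L^2 + 3 r L + 1 and (3r-1) L^2 = 6 m^2 - 6 m + 1 hold. -/
/-- The two first-order conditions for an interior critical point of `γ₈` are
incompatible for `r > 0`, `L ≥ 2`, `m < r`. -/
theorem no_interior_critical_point :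
    ¬ ∃ r L m : ℝ, 0 < r ∧ 2 ≤ L ∧ m < r ∧
      6 * m ^ 2 = (3 * r - 1) * L ^ 2 + 3 * r * L + 1 ∧
      (3 * r - 1) * L ^ 2 = 6 * m ^ 2 - 6 * m + 1 := by
  rintro ⟨r, L, m, hr, hL, hmr, h1, h2⟩
  nlinarith [mul_nonneg hr.le (sub_nonneg.2 hL)]
end
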